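/- arXiv:1810.08953 — 2 statements merged into one kernel-verified Lean document; each statement's English description precedes it below -/
import Mathlib

section
/- In the formal power series ring ℚ⟦x,y⟧, substituting the series x + y − xy into the power series f(t) = Σ_{m≥1} t^m/m yields f(x) + f(y); that is, Σ_{m≥1} (x + y − xy)^m/m = Σ_{m≥1} x^m/m + Σ_{m≥1} y^m/m. (The series Σ_{m≥1} t^m/m is the logarithm of the multiplicative formal group law.) -/
open Finset

noncomputable section

namespace FGL

variable {R : Type*} [CommRing R]

/-- The coefficient of `x^i y^j` in a two-variable power series. -/
def coeff2 (R : Type*) [CommRing R] (i j : ℕ) (G : MvPowerSeries (Fin 2) R) : R :=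
  MvPowerSeries.coeff (Finsupp.single 0 i + Finsupp.single 1 j) G

/-- Substitution of two multivariate power series `a`, `b` (with zero constant
term) into a two-variable power series `G`, i.e. `G(a,b)`. -/
def subst2 {σ : Type*} (a b : MvPowerSeries σ R) (G : MvPowerSeries (Fin 2) R) :
    MvPowerSeries σ R :=
  fun d => ∑ p ∈ range ((d.sum fun _ e => e) + 1) ×ˢ range ((d.sum fun _ e => e) + 1),
    coeff2 R p.1 p.2 G * MvPowerSeries.coeff d (a ^ p.1 * b ^ p.2)

/-- Substitution of a multivariate power series `a` (with zero constant term)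
into a one-variable power series `f`, i.e. `f(a)`. -/
def substM {σ : Type*} (a : MvPowerSeries σ R) (f : PowerSeries R) : MvPowerSeries σ R :=
  fun d => ∑ k ∈ range ((d.sum fun _ e => e) + 1),
    PowerSeries.coeff k f * MvPowerSeries.coeff d (a ^ k)

/-- Substitution of a one-variable power series `a` (with zero constant term)
into a one-variable power series `f`, i.e. `f(a)`. -/
def substP (a f : PowerSeries R) : PowerSeries R :=
  PowerSeries.mk fun n => ∑ k ∈ range (n + 1),
    PowerSeries.coeff k f * PowerSeries.coeff n (a ^ k)

/-- Substitution of two one-variable power series `a`, `b` (with zero constant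
term) into a two-variable power series `G`, i.e. `G(a,b)`. -/
def subst2P (a b : PowerSeries R) (G : MvPowerSeries (Fin 2) R) : PowerSeries R :=
  PowerSeries.mk fun n => ∑ p ∈ range (n + 1) ×ˢ range (n + 1),
    coeff2 R p.1 p.2 G * PowerSeries.coeff n (a ^ p.1 * b ^ p.2)

/-- `G ∈ R⟦x,y⟧` is a (one-dimensional, commutative) formal group law over `R`:
`G(x,0) = x`, `G(0,y) = y`, `G(x,y) = G(y,x)`, and `G(G(x,y),z) = G(x,G(y,z))`. -/
def IsFGL (G : MvPowerSeries (Fin 2) R) : Prop :=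
  subst2 (MvPowerSeries.X 0) 0 G = MvPowerSeries.X 0 ∧
  subst2 0 (MvPowerSeries.X 1) G = MvPowerSeries.X 1 ∧
  subst2 (MvPowerSeries.X 1) (MvPowerSeries.X 0) G = G ∧
  subst2 (subst2 (MvPowerSeries.X 0) (MvPowerSeries.X 1) G)
      (MvPowerSeries.X 2 : MvPowerSeries (Fin 3) R) G
    = subst2 (MvPowerSeries.X 0) (subst2 (MvPowerSeries.X 1) (MvPowerSeries.X 2) G) G

/-- `f ∈ R⟦t⟧` is a homomorphism of formal group laws `G₁ → G₂`: it has zero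
constant term and satisfies `G₂(f(x), f(y)) = f(G₁(x,y))`. -/
def IsHom (G₁ G₂ : MvPowerSeries (Fin 2) R) (f : PowerSeries R) : Prop :=
  PowerSeries.constantCoeff f = 0 ∧
  subst2 (substM (MvPowerSeries.X 0) f) (substM (MvPowerSeries.X 1) f) G₂ = substM G₁ f

/-- `f ∈ R⟦t⟧` is a logarithm for `G`: `f(0) = 0`, `f'(0) = 1`, and
`f(G(x,y)) = f(x) + f(y)`. -/
def IsLog (G : MvPowerSeries (Fin 2) R) (f : PowerSeries R) : Prop :=
  PowerSeries.coeff 0 f = 0 ∧ PowerSeries.coeff 1 f = 1 ∧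
  substM G f = substM (MvPowerSeries.X 0) f + substM (MvPowerSeries.X 1) f

/-- The `n`-series of `G`: `[1]_G(t) = t`, `[n+1]_G(t) = G([n]_G(t), t)`. -/
def nSeries (G : MvPowerSeries (Fin 2) R) : ℕ → PowerSeries R
  | 0 => 0
  | 1 => PowerSeries.X
  | n + 2 => subst2P (nSeries G (n + 1)) PowerSeries.X G

end FGL

/-!
For `L(t) = Σ_{m ≥ 1} t^m / m` we have `L' = 1/(1 - t)`; let `G = x + y - xy`.
Since `1 - G = (1 - x)(1 - y)`, the chain rule gives
`∂ᵢ L(G) = ∂ᵢ G / ((1 - x)(1 - y)) = ∂ᵢ x / (1 - x) + ∂ᵢ y / (1 - y) = ∂ᵢ (L(x) + L(y))`.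
Both sides have constant term `0`, and over a ring without additive torsion a power series is
determined by its constant term and its partial derivatives.
-/

open PowerSeries

theorem MvPowerSeries.coeff_pow_eq_zero_of_degree_lt {σ R : Type*} [CommSemiring R]
    {a : MvPowerSeries σ R} (ha : constantCoeff a = 0) {d : σ →₀ ℕ} {k : ℕ}
    (hk : d.degree < k) : coeff d (a ^ k) = 0 :=
  coeff_of_lt_order ((Nat.cast_lt.mpr hk).trans_le (le_order_pow_of_constantCoeff_eq_zero k ha))

namespace FGL

variable {σ R : Type*} [CommRing R] {a : MvPowerSeries σ R}

theorem coeff_substM (a : MvPowerSeries σ R) (f : R⟦X⟧) (d : σ →₀ ℕ) :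
    MvPowerSeries.coeff d (substM a f) =
      ∑ k ∈ range (d.degree + 1), coeff k f * MvPowerSeries.coeff d (a ^ k) :=
  rfl

theorem coeff_substM_congr (a : MvPowerSeries σ R) {f g : R⟦X⟧} {d : σ →₀ ℕ}
    (h : ∀ k ≤ d.degree, coeff k f = coeff k g) :
    MvPowerSeries.coeff d (substM a f) = MvPowerSeries.coeff d (substM a g) := by
  simp only [coeff_substM]
  exact sum_congr rfl fun k hk => by rw [h k (Nat.lt_succ_iff.mp (mem_range.mp hk))]

theorem constantCoeff_substM (a : MvPowerSeries σ R) (f : R⟦X⟧) :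
    MvPowerSeries.constantCoeff (substM a f) = constantCoeff f := by
  rw [← MvPowerSeries.coeff_zero_eq_constantCoeff_apply, coeff_substM]
  simp

theorem substM_eq_subst (ha : MvPowerSeries.constantCoeff a = 0) (f : R⟦X⟧) :
    substM a f = f.subst a := by
  ext d
  rw [coeff_substM, coeff_subst (HasSubst.of_constantCoeff_zero ha),
    finsum_eq_sum_of_support_subset (s := range (d.degree + 1)) _ fun k hk => ?_]
  · simp only [smul_eq_mul]
  · rw [coe_range, Set.mem_Iio, Nat.lt_succ_iff]
    by_contra! hdk
    exact hk (by simp only [MvPowerSeries.coeff_pow_eq_zero_of_degree_lt ha hdk, smul_zero])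

theorem substM_one (ha : MvPowerSeries.constantCoeff a = 0) : substM a 1 = 1 := by
  rw [substM_eq_subst ha, ← coe_substAlgHom (HasSubst.of_constantCoeff_zero ha), map_one]

theorem substM_one_sub_X (ha : MvPowerSeries.constantCoeff a = 0) :
    substM a (1 - X) = 1 - a := by
  have hs := HasSubst.of_constantCoeff_zero ha
  rw [substM_eq_subst ha, ← coe_substAlgHom hs, map_sub, map_one, coe_substAlgHom, subst_X hs]

theorem substM_mul (ha : MvPowerSeries.constantCoeff a = 0) (f g : R⟦X⟧) :
    substM a (f * g) = substM a f * substM a g := by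
  simp only [substM_eq_subst ha, subst_mul (HasSubst.of_constantCoeff_zero ha)]

theorem pderiv_substM_coe (ha : MvPowerSeries.constantCoeff a = 0) (i : σ) (p : Polynomial R) :
    MvPowerSeries.pderiv R i (substM a p) =
      substM a (d⁄dX R p) * MvPowerSeries.pderiv R i a := by
  have hs := HasSubst.of_constantCoeff_zero ha
  rw [substM_eq_subst ha, substM_eq_subst ha, derivative_coe, subst_coe hs, subst_coe hs,
    Derivation.comp_aeval_eq, smul_eq_mul]

-- Reduced to the polynomial case by truncating `f` above the degree of the coefficient.
theorem pderiv_substM (ha : MvPowerSeries.constantCoeff a = 0) (i : σ) (f : R⟦X⟧) :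
    MvPowerSeries.pderiv R i (substM a f) =
      substM a (d⁄dX R f) * MvPowerSeries.pderiv R i a := by
  classical
  ext n
  set N := n.degree + 1
  have h_trunc : ∀ {g : R⟦X⟧} {e : σ →₀ ℕ} (m : ℕ), e.degree < m →
      MvPowerSeries.coeff e (substM a g) = MvPowerSeries.coeff e (substM a (trunc m g)) :=
    fun m he => coeff_substM_congr a fun k hk => (coeff_coe_trunc_of_lt (by omega)).symm
  have h_deriv : d⁄dX R (trunc (N + 1) f : R⟦X⟧) = trunc N (d⁄dX R f) := by
    rw [derivative_coe, trunc_derivative]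
  calc MvPowerSeries.coeff n (MvPowerSeries.pderiv R i (substM a f))
      = MvPowerSeries.coeff n (MvPowerSeries.pderiv R i (substM a (trunc (N + 1) f))) := by
        rw [MvPowerSeries.coeff_pderiv, MvPowerSeries.coeff_pderiv, h_trunc (N + 1) (by simp [N])]
    _ = MvPowerSeries.coeff n (substM a (d⁄dX R f) * MvPowerSeries.pderiv R i a) := by
        rw [pderiv_substM_coe ha, h_deriv, MvPowerSeries.coeff_mul, MvPowerSeries.coeff_mul]
        refine sum_congr rfl fun uv huv => ?_
        have hdeg : uv.1.degree < N :=
          Nat.lt_succ_of_le (Finsupp.degree_mono (HasAntidiagonal.antidiagonal.fst_le huv))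
        rw [← h_trunc N hdeg]

theorem pderiv_substM_mul_one_sub {L : R⟦X⟧} (hL : d⁄dX R L * (1 - X) = 1)
    (ha : MvPowerSeries.constantCoeff a = 0) (i : σ) :
    MvPowerSeries.pderiv R i (substM a L) * (1 - a) = MvPowerSeries.pderiv R i a := by
  rw [pderiv_substM ha, mul_right_comm, ← substM_one_sub_X ha, ← substM_mul ha, hL,
    substM_one ha, one_mul]

theorem substM_multiplicativeFGL_eq_add [IsAddTorsionFree R] {L : R⟦X⟧}
    (hL₀ : constantCoeff L = 0) (hL : d⁄dX R L * (1 - X) = 1) :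
    substM (MvPowerSeries.X 0 + MvPowerSeries.X 1 - MvPowerSeries.X 0 * MvPowerSeries.X 1 :
        MvPowerSeries (Fin 2) R) L
      = substM (MvPowerSeries.X 0) L + substM (MvPowerSeries.X 1) L := by
  set x : MvPowerSeries (Fin 2) R := MvPowerSeries.X 0
  set y : MvPowerSeries (Fin 2) R := MvPowerSeries.X 1
  set D := MvPowerSeries.pderiv R (σ := Fin 2)
  have hx : MvPowerSeries.constantCoeff x = 0 := MvPowerSeries.constantCoeff_X 0
  have hy : MvPowerSeries.constantCoeff y = 0 := MvPowerSeries.constantCoeff_X 1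
  have hG : MvPowerSeries.constantCoeff (x + y - x * y) = 0 := by simp [hx, hy]
  have hunit : IsUnit (1 - (x + y - x * y)) := by
    rw [MvPowerSeries.isUnit_iff_constantCoeff]
    simp [hG]
  refine MvPowerSeries.pderiv.ext (fun i => hunit.mul_left_injective ?_) ?_
  · calc D i (substM (x + y - x * y) L) * (1 - (x + y - x * y))
        = D i (x + y - x * y) := pderiv_substM_mul_one_sub hL hG i
      _ = D i x * (1 - y) + D i y * (1 - x) := by
        simp only [map_add, map_sub, Derivation.leibniz, smul_eq_mul]
        ring
      _ = D i (substM x L) * (1 - x) * (1 - y) + D i (substM y L) * (1 - y) * (1 - x) := by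
        rw [pderiv_substM_mul_one_sub hL hx, pderiv_substM_mul_one_sub hL hy]
      _ = D i (substM x L + substM y L) * (1 - (x + y - x * y)) := by
        rw [map_add]
        ring
  · simp [constantCoeff_substM, hL₀]

end FGL

/-- Substituting `x + y - xy` into `f(t) = Σ_{m ≥ 1} t^m / m` in `ℚ⟦x,y⟧` yields
`f(x) + f(y)`: the series `Σ_{m ≥ 1} t^m / m` is the logarithm of the
multiplicative formal group law. -/
theorem statement_6 :
    FGL.substM
        (MvPowerSeries.X 0 + MvPowerSeries.X 1 -
          MvPowerSeries.X 0 * MvPowerSeries.X 1 : MvPowerSeries (Fin 2) ℚ)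
        (PowerSeries.mk fun m => if m = 0 then 0 else (1 : ℚ) / m)
      = FGL.substM (MvPowerSeries.X 0 : MvPowerSeries (Fin 2) ℚ)
          (PowerSeries.mk fun m => if m = 0 then 0 else (1 : ℚ) / m)
        + FGL.substM (MvPowerSeries.X 1 : MvPowerSeries (Fin 2) ℚ)
          (PowerSeries.mk fun m => if m = 0 then 0 else (1 : ℚ) / m) := by
  refine FGL.substM_multiplicativeFGL_eq_add (by simp) ?_
  have h_deriv : d⁄dX ℚ (PowerSeries.mk fun m => if m = 0 then 0 else (1 : ℚ) / m) =
      PowerSeries.mk 1 := by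
    ext n
    rw [coeff_derivative, coeff_mk, coeff_mk, if_neg n.succ_ne_zero, Pi.one_apply, Nat.cast_succ]
    exact one_div_mul_cancel n.cast_add_one_ne_zero
  rw [h_deriv, mk_one_mul_one_sub_eq_one]
end
end

section
/- Let p be a prime of the form p = 4m + 1 for a natural number m. Then p does not divide the multinomial coefficient (4m)!/(m!)⁴; indeed, modulo p this coefficient is congruent to −(m!)^{−4}, which is nonzero. -/
open Finset

noncomputable section

/-! Wilson's theorem: when the parts sum to `p - 1`, the defining identity
`(∑ kᵢ)! = (∏ kᵢ!) · multinomial` reads `(∏ kᵢ!) · multinomial ≡ (p - 1)! ≡ -1 (mod p)`. -/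

open Nat

theorem Nat.prod_factorial_mul_multinomial_eq_neg_one {ι : Type*} (s : Finset ι) (f : ι → ℕ)
    {p : ℕ} [Fact p.Prime] (hsum : ∑ i ∈ s, f i = p - 1) :
    ((∏ i ∈ s, (f i)! : ℕ) : ZMod p) * multinomial s f = -1 := by
  rw [← Nat.cast_mul, multinomial_spec, hsum, ZMod.wilsons_lemma]

theorem eq_neg_inv_of_mul_eq_neg_one {K : Type*} [DivisionRing K] {a b : K} (h : a * b = -1) :
    b = -a⁻¹ := by
  rw [← neg_eq_iff_eq_neg]
  exact eq_inv_of_mul_eq_one_right (by rw [mul_neg, h, neg_neg])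

/-- For a prime `p = 4m + 1`, the multinomial coefficient `(4m)!/(m!)⁴` is not
divisible by `p`; indeed, modulo `p` it is congruent to `-(m!)⁻⁴`. -/
theorem statement_16 (p m : ℕ) (hp : p.Prime) (hpm : p = 4 * m + 1) :
    ¬ (p ∣ Nat.multinomial Finset.univ (fun _ : Fin 4 => m)) ∧
    ((Nat.multinomial Finset.univ (fun _ : Fin 4 => m) : ZMod p)
        = -((m.factorial : ZMod p))⁻¹ ^ 4) ∧
    ((Nat.multinomial Finset.univ (fun _ : Fin 4 => m) : ZMod p) ≠ 0) := by
  have := Fact.mk hp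
  have hsum : ∑ _i : Fin 4, m = p - 1 := by
    simp only [sum_const, Finset.card_fin, smul_eq_mul]
    omega
  have key := prod_factorial_mul_multinomial_eq_neg_one univ (fun _ : Fin 4 => m) hsum
  have hne : (multinomial univ (fun _ : Fin 4 => m) : ZMod p) ≠ 0 := fun h0 => by
    simp [h0] at key
  refine ⟨fun hdvd => hne ((ZMod.natCast_eq_zero_iff _ _).2 hdvd), ?_, hne⟩
  rw [eq_neg_inv_of_mul_eq_neg_one key]
  simp [prod_const, inv_pow]
end
end
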